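/- arXiv:1206.0167 — 2 statements merged into one kernel-verified Lean document; each statement's English description precedes it below -/
import Mathlib

section
/- Let n ≥ 2, λ₀ ≠ λ₁ real, λ₁ ≠ 0, K₀ = λ₀/(λ₀-λ₁), K₁ = λ₁/(λ₀-λ₁). Assume a₀²(λ₀+λ₁) = -(2/n)(λ₀-λ₁)² and ρ⁻¹ + λ₁ = a₀²K₁ with ρ⁻¹ ≠ 0 (ρ the support function value). Then (n-1)K₁ + (n+1)K₀ ≠ -1. -/
theorem stmt9 (n : ℕ) (hn : 2 ≤ n) (l0 l1 a0 ρ : ℝ) (hne : l0 ≠ l1) (hl1 : l1 ≠ 0)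
    (K0 K1 : ℝ) (hK0 : K0 = l0 / (l0 - l1)) (hK1 : K1 = l1 / (l0 - l1))
    (ha : a0 ^ 2 * (l0 + l1) = -(2 / n) * (l0 - l1) ^ 2)
    (hρinv : ρ⁻¹ ≠ 0) (hrel : ρ⁻¹ + l1 = a0 ^ 2 * K1) :
    (n - 1 : ℝ) * K1 + (n + 1 : ℝ) * K0 ≠ -1 := by
  intro h
  have hd : l0 - l1 ≠ 0 := sub_ne_zero.mpr hne
  have hn' : (n : ℝ) ≠ 0 := by positivity
  subst hK0 hK1
  field_simp at h ha hrel
  rw [one_div] at hrel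
  have hsum : (n : ℝ) * (l0 + l1) = -2 * (l0 - l1) := by linarith
  have h2 : a0 ^ 2 * (-2 * (l0 - l1)) = -(2 * (l0 - l1) ^ 2) := by
    rw [← hsum]; linarith [ha, mul_comm (a0 ^ 2 * (l0 + l1)) (n : ℝ)]
  have h3 : (a0 ^ 2 - (l0 - l1)) * (-2 * (l0 - l1)) = 0 := by nlinarith
  have ha0 : a0 ^ 2 = l0 - l1 := by
    rcases mul_eq_zero.mp h3 with h' | h'
    · linarith
    · exact absurd (by linarith : l0 - l1 = 0) hd
  apply hρinv
  rw [ha0] at hrel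
  have h4 : ρ⁻¹ * (l0 - l1) = 0 := by linear_combination hrel
  rcases mul_eq_zero.mp h4 with h' | h'
  · exact h'
  · exact absurd h' hd
end

section
/- Let n ≥ 2, K₁ ≠ 0, ρ₀ ≠ 0, γ₁(t) = γ₀ t^{-2K₁} (γ₀ ≠ 0), and define f(t, u) = (t^{-2K₁}, t^{-2K₁} u, φ₀ t^{-2K₁}(F(u) - (1/(2K₁)) log t)) ∈ ℝ^{n+1} for u ∈ ℝ^{n-1}, F : ℝ^{n-1} → ℝ smooth, φ₀ ≠ 0. Let c_f(t,u) = -2ρ₀ t ∂_t f(t,u). Then c_f = A f where A is the (n+1)×(n+1) matrix with 4ρ₀K₁ on the diagonal, entry ρ₀φ₀/K₁ in position (n+1, 1), and zeros elsewhere. -/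
theorem stmt16 (n : ℕ) (hn : 2 ≤ n) (K1 ρ0 φ0 : ℝ) (hK1 : K1 ≠ 0) (hρ0 : ρ0 ≠ 0)
    (hφ0 : φ0 ≠ 0) (F : (Fin (n - 1) → ℝ) → ℝ) (hF : ContDiff ℝ (⊤ : ℕ∞) F)
    (f : ℝ → (Fin (n - 1) → ℝ) → ℝ × (Fin (n - 1) → ℝ) × ℝ)
    (hf : ∀ t u, f t u =
      (t ^ (-2 * K1), fun i => t ^ (-2 * K1) * u i,
        φ0 * t ^ (-2 * K1) * (F u - 1 / (2 * K1) * Real.log t)))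
    (A : ℝ × (Fin (n - 1) → ℝ) × ℝ → ℝ × (Fin (n - 1) → ℝ) × ℝ)
    (hA : ∀ v, A v =
      (4 * ρ0 * K1 * v.1, fun i => 4 * ρ0 * K1 * v.2.1 i,
        4 * ρ0 * K1 * v.2.2 + (ρ0 * φ0 / K1) * v.1)) :
    ∀ t : ℝ, 0 < t → ∀ u : Fin (n - 1) → ℝ,
      (-2 * ρ0 * t) • deriv (fun s => f s u) t = A (f t u) := by
  intro t ht u
  have h1 : HasDerivAt (fun s : ℝ => s ^ (-2 * K1)) ((-2 * K1) * t ^ (-2 * K1 - 1)) t :=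
    Real.hasDerivAt_rpow_const (Or.inl ht.ne')
  have h2 : HasDerivAt (fun s : ℝ => fun i => s ^ (-2 * K1) * u i)
      (fun i => (-2 * K1) * t ^ (-2 * K1 - 1) * u i) t :=
    hasDerivAt_pi.mpr (fun i => h1.mul_const (u i))
  have hlog : HasDerivAt (fun s : ℝ => F u - 1 / (2 * K1) * Real.log s)
      (-(1 / (2 * K1) * t⁻¹)) t :=
    ((Real.hasDerivAt_log ht.ne').const_mul (1 / (2 * K1))).const_sub (F u)
  have h3 : HasDerivAt (fun s : ℝ => φ0 * s ^ (-2 * K1) * (F u - 1 / (2 * K1) * Real.log s))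
      (φ0 * ((-2 * K1) * t ^ (-2 * K1 - 1)) * (F u - 1 / (2 * K1) * Real.log t)
        + (φ0 * t ^ (-2 * K1)) * (-(1 / (2 * K1) * t⁻¹))) t :=
    (h1.const_mul φ0).mul hlog
  have htot : HasDerivAt (fun s => f s u)
      ((-2 * K1) * t ^ (-2 * K1 - 1),
        fun i => (-2 * K1) * t ^ (-2 * K1 - 1) * u i,
        φ0 * ((-2 * K1) * t ^ (-2 * K1 - 1)) * (F u - 1 / (2 * K1) * Real.log t)
          + (φ0 * t ^ (-2 * K1)) * (-(1 / (2 * K1) * t⁻¹))) t := by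
    have heq : (fun s => f s u)
        = fun s : ℝ => ((s ^ (-2 * K1), fun i => s ^ (-2 * K1) * u i,
            φ0 * s ^ (-2 * K1) * (F u - 1 / (2 * K1) * Real.log s)) :
              ℝ × (Fin (n - 1) → ℝ) × ℝ) := funext fun s => hf s u
    rw [heq]
    exact h1.prodMk (h2.prodMk h3)
  rw [htot.deriv, hA, hf]
  have key : t ^ (-2 * K1 - 1) * t = t ^ (-2 * K1) := by
    rw [← Real.rpow_add_one ht.ne']; ring_nf
  have hti : t * t⁻¹ = 1 := mul_inv_cancel₀ ht.ne'
  refine Prod.ext ?_ (Prod.ext ?_ ?_)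
  · show -2 * ρ0 * t * ((-2 * K1) * t ^ (-2 * K1 - 1)) = 4 * ρ0 * K1 * t ^ (-2 * K1)
    rw [← key]; ring
  · funext i
    show -2 * ρ0 * t * ((-2 * K1) * t ^ (-2 * K1 - 1) * u i) = 4 * ρ0 * K1 * (t ^ (-2 * K1) * u i)
    rw [← key]; ring
  · show -2 * ρ0 * t * (φ0 * ((-2 * K1) * t ^ (-2 * K1 - 1)) * (F u - 1 / (2 * K1) * Real.log t)
        + (φ0 * t ^ (-2 * K1)) * (-(1 / (2 * K1) * t⁻¹)))
      = 4 * ρ0 * K1 * (φ0 * t ^ (-2 * K1) * (F u - 1 / (2 * K1) * Real.log t))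
        + (ρ0 * φ0 / K1) * t ^ (-2 * K1)
    rw [← key]
    field_simp
    ring
end
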